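/- Let σ be a solution of U = V and ab (a ≠ b) a factor of σ(U) such that every occurrence of ab in σ(U) and σ(V) is implicit (lies inside σ(X) for single occurrences of variables). Define σ'(X) to be σ(X) with every occurrence of ab deleted. Then σ' is a solution of U = V with |σ'(U)| < |σ(U)|. -/

import Mathlib

variable {Γ 𝒳 : Type*}

def subApp (σ : 𝒳 → List Γ) (w : List (Γ ⊕ 𝒳)) : List Γ :=
  w.flatMap (Sum.elim (fun a => [a]) σ)

def occursAt (s p : List Γ) (i : ℕ) : Prop :=
  i + p.length ≤ s.length ∧ (s.drop i).take p.length = p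

def implicitAt (σ : 𝒳 → List Γ) (U : List (Γ ⊕ 𝒳)) (i len : ℕ) : Prop :=
  ∃ (j : ℕ) (X : 𝒳), U[j]? = some (Sum.inr X) ∧
    (subApp σ (U.take j)).length ≤ i ∧ i + len ≤ (subApp σ (U.take (j + 1))).length

/-- Greedily (leftmost) replace all occurrences of the pattern `p` by `r`. -/
def replAllBy {α : Type*} [DecidableEq α] (p r : List α) : List α → List α
  | [] => []
  | x :: xs =>
    if h : p <+: (x :: xs) ∧ p ≠ [] then
      r ++ replAllBy p r ((x :: xs).drop p.length)
    else
      x :: replAllBy p r xs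
termination_by l => l.length
decreasing_by
  · have hp : 0 < p.length := List.length_pos_iff.mpr h.2
    simp only [List.length_drop, List.length_cons]
    omega
  · simp

/-!
Every occurrence of `ab` lies inside the image of a single variable occurrence, so none of them
straddles the border between the images of two consecutive symbols of `U` (or `V`), and none
consists of a letter of the equation. Greedy deletion of a pattern commutes with concatenation
as long as no occurrence straddles the border, hence `σ'(U)` is `σ(U)` with `ab` deleted, and
likewise for `V`. So `σ'(U) = σ'(V)` follows from `σ(U) = σ(V)`, and `σ'(U)` is shorter because
`σ(U)` contains `ab`.
-/

section Straddling

variable {α : Type*} {p : List α}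

def Straddles (p u v : List α) : Prop :=
  ∃ p₁ p₂, p₁ ≠ [] ∧ p₂ ≠ [] ∧ p = p₁ ++ p₂ ∧ p₁ <:+ u ∧ p₂ <+: v

theorem Straddles.of_suffix {u u' v : List α} (h : Straddles p u' v) (hu : u' <:+ u) :
    Straddles p u v := by
  obtain ⟨p₁, p₂, h₁, h₂, rfl, hs, hpre⟩ := h
  exact ⟨p₁, p₂, h₁, h₂, rfl, hs.trans hu, hpre⟩

theorem prefix_of_prefix_append_of_not_straddles {u v : List α} (hu : u ≠ [])
    (h : p <+: u ++ v) (hs : ¬Straddles p u v) : p <+: u := by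
  rcases List.prefix_or_prefix_of_prefix h (List.prefix_append u v) with h' | ⟨q, rfl⟩
  · exact h'
  · by_cases hq : q = []
    · simp [hq]
    · exact absurd ⟨u, q, hu, hq, rfl, List.suffix_refl u,
        (List.prefix_append_right_inj u).mp h⟩ hs

end Straddling

section Deletion

variable {α : Type*} [DecidableEq α] {p r : List α}

theorem replAllBy_nil : replAllBy p r [] = [] := by
  rw [replAllBy]

theorem replAllBy_cons_of_prefix {x : α} {xs : List α} (h : p <+: x :: xs) (hp : p ≠ []) :
    replAllBy p r (x :: xs) = r ++ replAllBy p r ((x :: xs).drop p.length) := by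
  rw [replAllBy, dif_pos ⟨h, hp⟩]

theorem replAllBy_cons_of_not_prefix {x : α} {xs : List α} (h : ¬(p <+: x :: xs ∧ p ≠ [])) :
    replAllBy p r (x :: xs) = x :: replAllBy p r xs := by
  rw [replAllBy, dif_neg h]

theorem length_replAllBy_le (hr : r.length ≤ p.length) (w : List α) :
    (replAllBy p r w).length ≤ w.length := by
  induction w using replAllBy.induct p with
  | case1 => simp [replAllBy_nil]
  | case2 x xs h ih =>
    have := h.1.length_le
    rw [replAllBy_cons_of_prefix h.1 h.2, List.length_append]
    rw [List.length_drop] at ih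
    omega
  | case3 x xs h ih =>
    rw [replAllBy_cons_of_not_prefix h]
    simpa using ih

theorem length_replAllBy_lt (hr : r.length < p.length) {w : List α} (hw : p <:+: w) :
    (replAllBy p r w).length < w.length := by
  have hp : p ≠ [] := by rintro rfl; simp at hr
  induction w using replAllBy.induct p with
  | case1 => exact absurd (List.infix_nil.mp hw) hp
  | case2 x xs h _ =>
    have := h.1.length_le
    have := length_replAllBy_le (r := r) hr.le ((x :: xs).drop p.length)
    rw [replAllBy_cons_of_prefix h.1 h.2, List.length_append]
    rw [List.length_drop] at this
    omega
  | case3 x xs h ih =>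
    have hxs : p <:+: xs := (List.infix_cons_iff.mp hw).resolve_left fun h' => h ⟨h', hp⟩
    rw [replAllBy_cons_of_not_prefix h]
    simpa using ih hxs

theorem replAllBy_append {u v : List α} (h : ¬Straddles p u v) :
    replAllBy p r (u ++ v) = replAllBy p r u ++ replAllBy p r v := by
  induction u using replAllBy.induct p with
  | case1 => simp [replAllBy_nil]
  | case2 x xs hpre ih =>
    have hpre' : p <+: x :: (xs ++ v) := List.prefix_append_of_prefix hpre.1
    rw [List.cons_append, replAllBy_cons_of_prefix hpre' hpre.2, ← List.cons_append,
      List.drop_append_of_le_length hpre.1.length_le,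
      ih fun hs => h (hs.of_suffix (List.drop_suffix _ _)),
      replAllBy_cons_of_prefix hpre.1 hpre.2, List.append_assoc]
  | case3 x xs hpre ih =>
    have hpre' : ¬(p <+: x :: (xs ++ v) ∧ p ≠ []) := fun ⟨hp, hne⟩ =>
      hpre ⟨prefix_of_prefix_append_of_not_straddles (List.cons_ne_nil x xs) hp h, hne⟩
    rw [List.cons_append, replAllBy_cons_of_not_prefix hpre', replAllBy_cons_of_not_prefix hpre,
      ih fun hs => h (hs.of_suffix (List.suffix_cons x xs)), List.cons_append]

end Deletion

section Occurrences

variable {s p : List Γ} {i : ℕ}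

theorem occursAt_iff : occursAt s p i ↔ ∃ u v, s = u ++ p ++ v ∧ u.length = i := by
  constructor
  · rintro ⟨hlen, htake⟩
    refine ⟨s.take i, s.drop (i + p.length), ?_, by simp; omega⟩
    conv_lhs => rw [← List.take_append_drop i s, ← List.take_append_drop p.length (s.drop i),
      htake, List.drop_drop]
    rw [List.append_assoc]
  · rintro ⟨u, v, rfl, rfl⟩
    simp [occursAt]

theorem occursAt_length_append (u v : List Γ) : occursAt (u ++ p ++ v) p u.length :=
  occursAt_iff.mpr ⟨u, v, rfl, rfl⟩

theorem occursAt.append_left (h : occursAt s p i) (e : List Γ) :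
    occursAt (e ++ s) p (e.length + i) := by
  obtain ⟨u, v, rfl, rfl⟩ := occursAt_iff.mp h
  exact occursAt_iff.mpr ⟨e ++ u, v, by simp, by simp⟩

theorem occursAt.infix (h : occursAt s p i) : p <:+: s := by
  obtain ⟨u, v, rfl, -⟩ := occursAt_iff.mp h
  exact List.infix_append u p v

end Occurrences

section Implicit

variable {σ : 𝒳 → List Γ} {x : Γ ⊕ 𝒳} {w : List (Γ ⊕ 𝒳)} {i len : ℕ}

theorem subApp_cons (σ : 𝒳 → List Γ) (x : Γ ⊕ 𝒳) (w : List (Γ ⊕ 𝒳)) :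
    subApp σ (x :: w) = subApp σ [x] ++ subApp σ w := by
  simp [subApp]

theorem implicitAt_cons_of_lt (h : implicitAt σ (x :: w) i len)
    (hi : i < (subApp σ [x]).length) : ∃ X, x = Sum.inr X ∧ i + len ≤ (σ X).length := by
  obtain ⟨j, X, hj, h₁, h₂⟩ := h
  cases j with
  | zero =>
    simp only [List.getElem?_cons_zero, Option.some.injEq] at hj
    subst hj
    exact ⟨X, rfl, by simpa [subApp] using h₂⟩
  | succ j =>
    rw [List.take_succ_cons, subApp_cons, List.length_append] at h₁
    omega

theorem implicitAt_cons_of_le (h : implicitAt σ (x :: w) ((subApp σ [x]).length + i) len)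
    (hlen : 0 < len) : implicitAt σ w i len := by
  obtain ⟨j, X, hj, h₁, h₂⟩ := h
  cases j with
  | zero =>
    rw [zero_add, List.take_one, List.head?_cons, Option.toList_some] at h₂
    omega
  | succ j =>
    rw [List.take_succ_cons, subApp_cons σ x (w.take j), List.length_append] at h₁
    rw [List.take_succ_cons, subApp_cons σ x (w.take (j + 1)), List.length_append] at h₂
    exact ⟨j, X, by simpa using hj, by omega, by omega⟩

def AllImplicit (σ : 𝒳 → List Γ) (w : List (Γ ⊕ 𝒳)) (p : List Γ) : Prop :=
  ∀ i, occursAt (subApp σ w) p i → implicitAt σ w i p.length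

variable {p : List Γ}

theorem AllImplicit.of_cons (h : AllImplicit σ (x :: w) p) (hp : p ≠ []) :
    AllImplicit σ w p := fun _ hi =>
  implicitAt_cons_of_le (h _ (subApp_cons σ x w ▸ hi.append_left _)) (List.length_pos_iff.mpr hp)

theorem AllImplicit.not_straddles (h : AllImplicit σ (x :: w) p) :
    ¬Straddles p (subApp σ [x]) (subApp σ w) := by
  rintro ⟨p₁, p₂, h₁, h₂, rfl, ⟨e, he⟩, ⟨t, ht⟩⟩
  have hocc : occursAt (subApp σ (x :: w)) (p₁ ++ p₂) e.length := by
    rw [subApp_cons, ← he, ← ht]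
    simpa using occursAt_length_append (p := p₁ ++ p₂) e t
  have hsplit : e.length + p₁.length = (subApp σ [x]).length := by
    rw [← he, List.length_append]
  have hlt : e.length < (subApp σ [x]).length := by
    have := List.length_pos_iff.mpr h₁
    omega
  obtain ⟨X, rfl, hX⟩ := implicitAt_cons_of_lt (h _ hocc) hlt
  have hσX : (subApp σ [Sum.inr X]).length = (σ X).length := by simp [subApp]
  have := List.length_pos_iff.mpr h₂
  rw [List.length_append] at hX
  omega

theorem AllImplicit.not_prefix_of_inl {c : Γ} (h : AllImplicit σ (Sum.inl c :: w) p) :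
    ¬(p <+: [c] ∧ p ≠ []) := by
  rintro ⟨⟨t, ht⟩, -⟩
  have hocc : occursAt (subApp σ (Sum.inl c :: w)) p 0 := by
    rw [subApp_cons, occursAt_iff]
    exact ⟨[], t ++ subApp σ w, by simp [subApp, ← ht], rfl⟩
  obtain ⟨X, hX, -⟩ := implicitAt_cons_of_lt (h 0 hocc) (by simp [subApp])
  exact Sum.inl_ne_inr hX

end Implicit

theorem subApp_replAllBy [DecidableEq Γ] {p r : List Γ} (hp : p ≠ []) (σ : 𝒳 → List Γ)
    {w : List (Γ ⊕ 𝒳)} (hw : AllImplicit σ w p) :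
    subApp (fun X => replAllBy p r (σ X)) w = replAllBy p r (subApp σ w) := by
  induction w with
  | nil => simp [subApp, replAllBy_nil]
  | cons x w ih =>
    have hsymbol :
        subApp (fun X => replAllBy p r (σ X)) [x] = replAllBy p r (subApp σ [x]) := by
      cases x with
      | inr X => simp [subApp]
      | inl c =>
        simp [subApp, replAllBy_cons_of_not_prefix hw.not_prefix_of_inl, replAllBy_nil]
    rw [subApp_cons, ih (hw.of_cons hp), hsymbol, ← replAllBy_append hw.not_straddles,
      ← subApp_cons]

theorem stmt3_general [DecidableEq Γ] (U V : List (Γ ⊕ 𝒳)) (σ : 𝒳 → List Γ)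
    (a b : Γ)
    (hsol : subApp σ U = subApp σ V)
    (hoccur : ∃ i, occursAt (subApp σ U) [a, b] i)
    (hU : ∀ i, occursAt (subApp σ U) [a, b] i → implicitAt σ U i 2)
    (hV : ∀ i, occursAt (subApp σ V) [a, b] i → implicitAt σ V i 2) :
    subApp (fun X => replAllBy [a, b] [] (σ X)) U =
      subApp (fun X => replAllBy [a, b] [] (σ X)) V ∧
    (subApp (fun X => replAllBy [a, b] [] (σ X)) U).length < (subApp σ U).length := by
  have hp : [a, b] ≠ [] := List.cons_ne_nil a [b]
  have hσU := subApp_replAllBy (r := []) hp σ hU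
  obtain ⟨i, hi⟩ := hoccur
  refine ⟨by rw [hσU, subApp_replAllBy hp σ hV, hsol], ?_⟩
  rw [hσU]
  exact length_replAllBy_lt (by simp) hi.infix

/-- If every occurrence of ab (a ≠ b) in σ(U) and σ(V) is implicit, then deleting every
occurrence of ab inside each σ(X) yields a strictly shorter solution of U = V. -/
theorem stmt3 [DecidableEq Γ] (U V : List (Γ ⊕ 𝒳)) (σ : 𝒳 → List Γ)
    (a b : Γ) (hab : a ≠ b)
    (hsol : subApp σ U = subApp σ V)
    (hoccur : ∃ i, occursAt (subApp σ U) [a, b] i)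
    (hU : ∀ i, occursAt (subApp σ U) [a, b] i → implicitAt σ U i 2)
    (hV : ∀ i, occursAt (subApp σ V) [a, b] i → implicitAt σ V i 2) :
    subApp (fun X => replAllBy [a, b] [] (σ X)) U =
      subApp (fun X => replAllBy [a, b] [] (σ X)) V ∧
    (subApp (fun X => replAllBy [a, b] [] (σ X)) U).length < (subApp σ U).length :=
  stmt3_general U V σ a b hsol hoccur hU hV
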